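/- If M and N are simple λ-terms that do not match eventually, i.e. it is not the case that cBT(M) and cBT(N) have the same underlying Böhm Tree with equal annotations at all annotated positions of length ≥ ℓ for some ℓ ∈ ℕ, then M ≠β N. -/

import Mathlib

/-- Untyped λ-terms in de Bruijn notation (the variables are `ℕ`). -/
inductive Lam : Type
  | var : ℕ → Lam
  | app : Lam → Lam → Lam
  | abs : Lam → Lam
  deriving DecidableEq

namespace Lam

/-- Shift the free de Bruijn indices `≥ d` up by one. -/
def lift (d : ℕ) : Lam → Lam
  | var n => if n < d then var n else var (n + 1)
  | app s t => app (lift d s) (lift d t)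
  | abs t => abs (lift (d + 1) t)

/-- Capture-avoiding substitution `t[k := u]`. -/
def subst : Lam → ℕ → Lam → Lam
  | var n, k, u => if n < k then var n else if n = k then u else var (n - 1)
  | app s t, k, u => app (subst s k u) (subst t k u)
  | abs t, k, u => abs (subst t (k + 1) (lift 0 u))

/-- One-step β-reduction `→β`: the compatible closure of the β-rule. -/
inductive Beta : Lam → Lam → Prop
  | beta (t u : Lam) : Beta (Lam.app (Lam.abs t) u) (subst t 0 u)
  | appL {s s' : Lam} (t : Lam) : Beta s s' → Beta (Lam.app s t) (Lam.app s' t)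
  | appR (s : Lam) {t t' : Lam} : Beta t t' → Beta (Lam.app s t) (Lam.app s t')
  | abs {t t' : Lam} : Beta t t' → Beta (Lam.abs t) (Lam.abs t')

/-- `↠β`: the reflexive–transitive closure of `→β`. -/
def BetaStar : Lam → Lam → Prop := Relation.ReflTransGen Beta

/-- `→β^k`: the `k`-fold composition of `→β`. -/
def BetaN : ℕ → Lam → Lam → Prop
  | 0, s, t => s = t
  | k + 1, s, t => ∃ u, Beta s u ∧ BetaN k u t

/-- `=β`, β-convertibility: the equivalence closure of `→β`. -/
inductive Conv : Lam → Lam → Prop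
  | rel {s t : Lam} : Beta s t → Conv s t
  | refl (s : Lam) : Conv s s
  | symm {s t : Lam} : Conv s t → Conv t s
  | trans {s t u : Lam} : Conv s t → Conv t u → Conv s u

/-- The free variables of a term (as de Bruijn indices). -/
def FV : Lam → Finset ℕ
  | var n => {n}
  | app s t => FV s ∪ FV t
  | abs t => ((FV t).erase 0).image (· - 1)

/-- `Y` is a fixed point combinator (fpc): `Y x =β x (Y x)` for a variable `x` not free in `Y`. -/
def IsFPC (Y : Lam) : Prop :=
  ∀ x : ℕ, x ∉ FV Y → Conv (app Y (var x)) (app (var x) (app Y (var x)))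

/-- `I = λx.x` -/
def combI : Lam := abs (var 0)

/-- `S = λxyz.xz(yz)` -/
def combS : Lam := abs (abs (abs (app (app (var 2) (var 0)) (app (var 1) (var 0)))))

/-- `B = λxyz.x(yz)` -/
def combB : Lam := abs (abs (abs (app (var 2) (app (var 1) (var 0)))))

/-- `δ = λab.b(ab)` -/
def delta : Lam := abs (abs (app (var 0) (app (var 1) (var 0))))

/-- `η = λxf.f(xxf)` -/
def etaC : Lam := abs (abs (app (var 0) (app (app (var 1) (var 1)) (var 0))))

/-- Curry's fpc `Y₀ = λf.(λx.f(xx))(λx.f(xx))` -/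
def curryY : Lam :=
  abs (app (abs (app (var 1) (app (var 0) (var 0))))
    (abs (app (var 1) (app (var 0) (var 0)))))

/-- `A B ⋯ B`: `A` applied to `n` copies of `B`, associating to the left. -/
def appN (A B : Lam) : ℕ → Lam
  | 0 => A
  | n + 1 => app (appN A B n) B

/-- `M N₁ ⋯ Nₘ`: `M` applied to the terms in `L`, associating to the left. -/
def appList (M : Lam) (L : List Lam) : Lam := L.foldl app M

/-- `M` is an abstraction. -/
def IsAbs : Lam → Prop
  | abs _ => True
  | _ => False

/-- A head reduction step:
    `λx₁…xₙ.(λy.M)N N₁…Nₘ →h λx₁…xₙ.M[y:=N] N₁…Nₘ`. -/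
inductive HeadStep : Lam → Lam → Prop
  | beta (t u : Lam) : HeadStep (Lam.app (Lam.abs t) u) (subst t 0 u)
  | app {s s' : Lam} (t : Lam) : ¬ IsAbs s → HeadStep s s' → HeadStep (Lam.app s t) (Lam.app s' t)
  | abs {t t' : Lam} : HeadStep t t' → HeadStep (Lam.abs t) (Lam.abs t')

/-- `→h^k`: `k`-fold head reduction. -/
def HeadSteps : ℕ → Lam → Lam → Prop
  | 0, s, t => s = t
  | k + 1, s, t => ∃ u, HeadStep s u ∧ HeadSteps k u t

/-- `λ^n.t`: `n` abstractions in front of `t`. -/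
def absN : ℕ → Lam → Lam
  | 0, t => t
  | n + 1, t => abs (absN n t)

/-- The head normal form `λx₁…xₙ. y A₁ ⋯ Aₘ` (de Bruijn head variable `y`). -/
def mkHnf (n y : ℕ) (args : List Lam) : Lam := absN n (appList (var y) args)

/-- Head normal forms. -/
def IsHnf (M : Lam) : Prop := ∃ n y args, M = mkHnf n y args

/-- `M` has a head normal form (its head reduction reaches an hnf). -/
def HasHnf (M : Lam) : Prop := ∃ k H, HeadSteps k M H ∧ IsHnf H

/-- Nodes of a (clocked) Böhm Tree, seen as an infinite λ⊥-term. -/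
inductive BTN : Type
  | lam : BTN
  | app : BTN
  | var : ℕ → BTN
  | bot : BTN
  deriving DecidableEq

/-- `CBT M p o a`: in the clocked Böhm Tree of `M`, the position `p`
    (a sequence over `{0,1,2}`: `0` descends under an abstraction, `1` and `2` to the
    left and right parts of an application) carries the node `o` with annotation `a`
    (`a = some k` exactly at the roots of the coinductive blocks, where `k` is the number
    of head reduction steps needed to reach the hnf producing that block). -/
inductive CBT : Lam → List ℕ → BTN → Option ℕ → Prop
  | bot {M : Lam} : ¬ HasHnf M → CBT M [] BTN.bot none
  | lam {M : Lam} {k n y : ℕ} {args : List Lam} {i : ℕ} :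
      HeadSteps k M (mkHnf n y args) → i < n →
      CBT M (List.replicate i 0) BTN.lam (if i = 0 then some k else none)
  | app {M : Lam} {k n y : ℕ} {args : List Lam} {j : ℕ} :
      HeadSteps k M (mkHnf n y args) → j < args.length →
      CBT M (List.replicate n 0 ++ List.replicate j 1) BTN.app
        (if n = 0 ∧ j = 0 then some k else none)
  | var {M : Lam} {k n y : ℕ} {args : List Lam} :
      HeadSteps k M (mkHnf n y args) →
      CBT M (List.replicate n 0 ++ List.replicate args.length 1) (BTN.var y)
        (if n = 0 ∧ args.length = 0 then some k else none)
  | child {M : Lam} {k n y : ℕ} {args : List Lam} {i : ℕ} {q : List ℕ} {o : BTN} {a : Option ℕ} :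
      HeadSteps k M (mkHnf n y args) → (h : i < args.length) →
      CBT (args.get ⟨i, h⟩) q o a →
      CBT M (List.replicate n 0 ++ List.replicate (args.length - 1 - i) 1 ++ 2 :: q) o a

/-- The underlying (annotation-free) Böhm Tree: node `o` at position `p`. -/
def BTNode (M : Lam) (p : List ℕ) (o : BTN) : Prop := ∃ a, CBT M p o a

/-- `cBT M` and `cBT N` have the same underlying (annotation-free) Böhm Tree. -/
def SameBT (M N : Lam) : Prop := ∀ (p : List ℕ) (o : BTN), BTNode M p o ↔ BTNode N p o

/-- At every position of length `≥ l` where both clocked Böhm Trees are annotated,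
    the annotation of `cBT M` is `≤` the annotation of `cBT N`. -/
def AnnLeFrom (l : ℕ) (M N : Lam) : Prop :=
  ∀ (p : List ℕ) (o₁ o₂ : BTN) (k₁ k₂ : ℕ), l ≤ p.length →
    CBT M p o₁ (some k₁) → CBT N p o₂ (some k₂) → k₁ ≤ k₂

/-- At every position of length `≥ l` where both clocked Böhm Trees are annotated,
    the annotations of `cBT M` and `cBT N` are equal. -/
def AnnEqFrom (l : ℕ) (M N : Lam) : Prop :=
  ∀ (p : List ℕ) (o₁ o₂ : BTN) (k₁ k₂ : ℕ), l ≤ p.length →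
    CBT M p o₁ (some k₁) → CBT N p o₂ (some k₂) → k₁ = k₂

/-- `cBT M ≤ cBT N`: same underlying Böhm Tree and pointwise `≤` on annotations;
    i.e. `M` improves `N` globally. -/
def CBTle (M N : Lam) : Prop := SameBT M N ∧ AnnLeFrom 0 M N

/-- `M` improves `N` eventually. -/
def ImprovesEventually (M N : Lam) : Prop := SameBT M N ∧ ∃ l, AnnLeFrom l M N

/-- `M` matches `N` eventually. -/
def MatchesEventually (M N : Lam) : Prop := SameBT M N ∧ ∃ l, AnnEqFrom l M N

/-- Number of occurrences of the variable (de Bruijn index) `k` in a term. -/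
def occ (k : ℕ) : Lam → ℕ
  | var n => if n = k then 1 else 0
  | app s t => occ k s + occ k t
  | abs t => occ (k + 1) t

/-- β-normal forms. -/
def IsNormalForm (M : Lam) : Prop := ∀ N, ¬ Beta M N

/-- A head reduction step contracting a *simple* redex `(λx.M)N`,
    i.e. one that is linear (`x` occurs at most once in `M`) or
    call-by-value (`N` is a normal form). -/
inductive SimpleHeadStep : Lam → Lam → Prop
  | beta (t u : Lam) : occ 0 t ≤ 1 ∨ IsNormalForm u →
      SimpleHeadStep (Lam.app (Lam.abs t) u) (subst t 0 u)
  | app {s s' : Lam} (t : Lam) : ¬ IsAbs s → SimpleHeadStep s s' →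
      SimpleHeadStep (Lam.app s t) (Lam.app s' t)
  | abs {t t' : Lam} : SimpleHeadStep t t' → SimpleHeadStep (Lam.abs t) (Lam.abs t')

/-- Simple terms: the largest set `X` such that for `M ∈ X`, either `M` has no hnf,
    or the head reduction of `M` to hnf `λx₁…xₙ.y M₁…Mₘ` contracts only simple
    redexes and `M₁,…,Mₘ ∈ X`. -/
def SimpleTerm (M : Lam) : Prop :=
  ∃ X : Lam → Prop, X M ∧
    ∀ N, X N → ¬ HasHnf N ∨
      ∃ n y args, Relation.ReflTransGen SimpleHeadStep N (mkHnf n y args) ∧ ∀ A ∈ args, X A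

/-!
By Church–Rosser, `M =β N` gives a common reduct `L` of `M` and `N`. A standard reduction
`M ↠β L` can be organised so that every weak head step is paid from a finite budget `T`,
where a substitution may reuse the cost of the substituted term only if that term is not
duplicated or is normal. For simple `M` the redexes contracted by head reduction are of
exactly this kind, so the head reduction of `M` to its hnf is simulated by the head
reduction of `L` to an hnf with the same head, and the steps `L` saves, together with the
budgets of the arguments, fit into `T`. By induction along positions, `cBT M` and `cBT L`
have the same Böhm tree and their annotations differ at no more than `T` positions, hence
not below some depth. The same holds for `N`, so `M` and `N` match eventually.
-/

open Relation

/-! ### Substitution and occurrences -/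

attribute [simp] lift subst

theorem lift_lift (t : Lam) {d e : ℕ} (h : d ≤ e) :
    lift d (lift e t) = lift (e + 1) (lift d t) := by
  induction t generalizing d e with
  | var n => simp only [lift]; split_ifs <;> simp only [lift] <;> split_ifs <;> first | rfl | omega
  | app s t ihs iht => simp only [lift, ihs h, iht h]
  | abs t iht => simp only [lift, iht (Nat.succ_le_succ h)]

@[simp]
theorem subst_lift (t : Lam) (k : ℕ) (u : Lam) : subst (lift k t) k u = t := by
  induction t generalizing k u with
  | var n => simp only [lift]; split_ifs <;> simp only [subst] <;> split_ifs <;> first | rfl | omega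
  | app s t ihs iht => simp only [lift, subst, ihs, iht]
  | abs t iht => simp only [lift, subst, iht]

theorem lift_subst_of_le (t : Lam) {d k : ℕ} (u : Lam) (h : d ≤ k) :
    lift d (subst t k u) = subst (lift d t) (k + 1) (lift d u) := by
  induction t generalizing d k u with
  | var n =>
      simp only [subst]; split_ifs <;> simp only [lift] <;> split_ifs <;> simp only [subst] <;>
        split_ifs <;> first | rfl | omega | (congr 1; omega)
  | app s t ihs iht => simp only [lift, subst, ihs _ h, iht _ h]
  | abs t iht =>
      simp only [lift, subst, iht _ (Nat.succ_le_succ h), lift_lift u (Nat.zero_le d)]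

theorem lift_subst_of_ge (t : Lam) {d k : ℕ} (u : Lam) (h : k ≤ d) :
    lift d (subst t k u) = subst (lift (d + 1) t) k (lift d u) := by
  induction t generalizing d k u with
  | var n =>
      simp only [subst]; split_ifs <;> simp only [lift] <;> split_ifs <;> simp only [subst] <;>
        split_ifs <;> first | rfl | omega | (congr 1; omega)
  | app s t ihs iht => simp only [lift, subst, ihs _ h, iht _ h]
  | abs t iht =>
      simp only [lift, subst, iht _ (Nat.succ_le_succ h), lift_lift u (Nat.zero_le d)]

theorem subst_subst (t : Lam) {j K : ℕ} (u v : Lam) (h : j ≤ K) :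
    subst (subst t j u) K v = subst (subst t (K + 1) (lift j v)) j (subst u K v) := by
  induction t generalizing j K u v with
  | var n =>
      simp only [subst]
      split_ifs <;> (try simp only [subst]) <;> (try split_ifs) <;>
        first | rfl | omega | rw [subst_lift]
  | app s t ihs iht => simp only [subst, ihs _ _ h, iht _ _ h]
  | abs t iht =>
      simp only [subst, iht _ _ (Nat.succ_le_succ h), lift_lift v (Nat.zero_le j),
        lift_subst_of_le u _ (Nat.zero_le K)]

theorem subst_subst_zero (B C : Lam) (k : ℕ) (u : Lam) :
    subst (subst B 0 C) k u = subst (subst B (k + 1) (lift 0 u)) 0 (subst C k u) :=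
  subst_subst B C u (Nat.zero_le k)

theorem occ_lift (t : Lam) (d x : ℕ) :
    occ (if x < d then x else x + 1) (lift d t) = occ x t := by
  induction t generalizing d x with
  | var n => simp only [lift, occ]; split_ifs <;> simp only [occ] <;> split_ifs <;> omega
  | app s t ihs iht => simp only [lift, occ, ihs, iht]
  | abs t iht =>
      have := iht (d + 1) (x + 1)
      simp only [lift, occ]
      split_ifs at this ⊢ <;> simp_all; omega

theorem occ_lift_of_lt (t : Lam) {d x : ℕ} (h : x < d) : occ x (lift d t) = occ x t := by
  simpa [h] using occ_lift t d x

theorem occ_lift_of_le (t : Lam) {d x : ℕ} (h : d ≤ x) : occ (x + 1) (lift d t) = occ x t := by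
  simpa [Nat.not_lt.2 h] using occ_lift t d x

@[simp]
theorem occ_lift_self (t : Lam) (d : ℕ) : occ d (lift d t) = 0 := by
  induction t generalizing d with
  | var n => simp only [lift]; split_ifs <;> simp only [occ] <;> split_ifs <;> omega
  | app s t ihs iht => simp only [lift, occ, ihs, iht]
  | abs t iht => simp only [lift, occ, iht]

theorem occ_subst_of_lt (t : Lam) {k x : ℕ} (u : Lam) (h : x < k) :
    occ x (subst t k u) = occ x t + occ k t * occ x u := by
  induction t generalizing k u x with
  | var n =>
      simp only [subst, occ]; split_ifs <;> (try simp only [occ]) <;> (try split_ifs) <;> omega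
  | app s t ihs iht => simp only [subst, occ, ihs _ h, iht _ h]; ring
  | abs t iht =>
      simp only [subst, occ, iht _ (Nat.succ_lt_succ h), occ_lift_of_le u (Nat.zero_le x)]

theorem occ_subst_of_le (t : Lam) {j x : ℕ} (u : Lam) (h : j ≤ x) :
    occ x (subst t j u) = occ (x + 1) t + occ j t * occ x u := by
  induction t generalizing j u x with
  | var n =>
      simp only [subst, occ]; split_ifs <;> (try simp only [occ]) <;> (try split_ifs) <;> omega
  | app s t ihs iht => simp only [subst, occ, ihs _ h, iht _ h]; ring
  | abs t iht =>
      simp only [subst, occ, iht _ (Nat.succ_le_succ h), occ_lift_of_le u (Nat.zero_le x)]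

@[simp]
theorem occ_zero_subst_succ_lift (B : Lam) (k : ℕ) (Q : Lam) :
    occ 0 (subst B (k + 1) (lift 0 Q)) = occ 0 B := by
  simp [occ_subst_of_lt B (lift 0 Q) (Nat.succ_pos k)]

theorem subst_congr_of_occ_eq_zero {t : Lam} {k : ℕ} (u u' : Lam) (h : occ k t = 0) :
    subst t k u = subst t k u' := by
  induction t generalizing k u u' with
  | var n => simp only [occ] at h; simp only [subst]; split_ifs <;> simp_all
  | app s t ihs iht =>
      simp only [occ, Nat.add_eq_zero_iff] at h
      simp only [subst, ihs u u' h.1, iht u u' h.2]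
  | abs t iht => simp only [subst, iht (lift 0 u) (lift 0 u') h]

/-! ### β-reduction and normal forms -/

theorem Beta.lift {t t' : Lam} (h : Beta t t') (d : ℕ) : Beta (Lam.lift d t) (Lam.lift d t') := by
  induction h generalizing d with
  | beta B C => simpa [lift_subst_of_ge B C (Nat.zero_le d)] using Beta.beta _ _
  | appL t _ ih => exact .appL _ (ih d)
  | appR s _ ih => exact .appR _ (ih d)
  | abs _ ih => exact .abs (ih (d + 1))

theorem Beta.subst_left {t t' : Lam} (h : Beta t t') (k : ℕ) (u : Lam) :
    Beta (subst t k u) (subst t' k u) := by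
  induction h generalizing k u with
  | beta B C => simpa [subst_subst_zero] using Beta.beta _ _
  | appL t _ ih => exact .appL _ (ih k u)
  | appR s _ ih => exact .appR _ (ih k u)
  | abs _ ih => exact .abs (ih (k + 1) (Lam.lift 0 u))

theorem Beta.exists_of_lift : ∀ {t : Lam} {d : ℕ} {X : Lam}, Beta (Lam.lift d t) X →
    ∃ t', X = Lam.lift d t' ∧ Beta t t'
  | var n, d, X, h => by simp only [Lam.lift] at h; split_ifs at h <;> cases h
  | app s t, d, X, h => by
      simp only [Lam.lift] at h
      generalize hs : Lam.lift d s = ls at h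
      cases h with
      | beta B C =>
          cases s with
          | abs s₀ =>
              cases hs
              exact ⟨subst s₀ 0 t, (lift_subst_of_ge s₀ t (Nat.zero_le d)).symm, Beta.beta _ _⟩
          | _ => simp only [Lam.lift] at hs; (try split_ifs at hs) <;> cases hs
      | appL t h' =>
          subst hs
          obtain ⟨s', rfl, hsb⟩ := exists_of_lift h'; exact ⟨app s' t, rfl, Beta.appL _ hsb⟩
      | appR s h' =>
          subst hs
          obtain ⟨t', rfl, ht⟩ := exists_of_lift h'; exact ⟨app s t', rfl, Beta.appR _ ht⟩
  | .abs t, d, X, h => by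
      simp only [Lam.lift] at h
      cases h with
      | abs h' => obtain ⟨t', rfl, ht⟩ := exists_of_lift h'; exact ⟨.abs t', rfl, Beta.abs ht⟩

theorem isNormalForm_abs_iff {t : Lam} : IsNormalForm (abs t) ↔ IsNormalForm t := by
  constructor
  · intro h N hN; exact h (abs N) (Beta.abs hN)
  · intro h N hN; cases hN with | abs h' => exact h _ h'

theorem IsNormalForm.app_left {s t : Lam} (h : IsNormalForm (app s t)) : IsNormalForm s :=
  fun _ hN => h _ (Beta.appL _ hN)

theorem IsNormalForm.app_right {s t : Lam} (h : IsNormalForm (app s t)) : IsNormalForm t :=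
  fun _ hN => h _ (Beta.appR _ hN)

theorem isNormalForm_lift_iff {t : Lam} {d : ℕ} : IsNormalForm (lift d t) ↔ IsNormalForm t := by
  constructor
  · intro h N hN; exact h _ (hN.lift d)
  · intro h N hN; obtain ⟨t', _, ht⟩ := Beta.exists_of_lift hN; exact h _ ht

theorem IsNormalForm.of_subst {C Q : Lam} {k : ℕ} (h : IsNormalForm (subst C k Q)) :
    IsNormalForm C :=
  fun _ hN => h _ (hN.subst_left k Q)

theorem IsNormalForm.of_subst_of_occ_pos {C Q : Lam} {k : ℕ} (hocc : 0 < occ k C)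
    (h : IsNormalForm (subst C k Q)) : IsNormalForm Q := by
  induction C generalizing k Q with
  | var n =>
      simp only [occ] at hocc
      split_ifs at hocc with he
      · simpa [he] using h
      · omega
  | app s t ihs iht =>
      simp only [occ] at hocc
      simp only [subst] at h
      rcases Nat.eq_zero_or_pos (occ k s) with hs | hs
      · exact iht (by omega) h.app_right
      · exact ihs hs h.app_left
  | abs t iht => exact isNormalForm_lift_iff.1 (iht hocc (isNormalForm_abs_iff.1 h))

theorem IsNormalForm.eq_of_betaStar {t t' : Lam} (h : IsNormalForm t) (hs : BetaStar t t') :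
    t' = t := by
  induction hs using ReflTransGen.head_induction_on with
  | refl => rfl
  | head h₁ _ _ => exact absurd h₁ (h _)

theorem BetaStar.app_left {s s' : Lam} (t : Lam) (h : BetaStar s s') :
    BetaStar (Lam.app s t) (Lam.app s' t) :=
  ReflTransGen.lift (fun s => Lam.app s t) (fun _ _ => Beta.appL t) _ _ h

theorem BetaStar.app_right (s : Lam) {t t' : Lam} (h : BetaStar t t') :
    BetaStar (Lam.app s t) (Lam.app s t') :=
  ReflTransGen.lift (Lam.app s) (fun _ _ => Beta.appR s) _ _ h

theorem BetaStar.app {s s' t t' : Lam} (hs : BetaStar s s') (ht : BetaStar t t') :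
    BetaStar (Lam.app s t) (Lam.app s' t') :=
  (hs.app_left t).trans (ht.app_right s')

theorem BetaStar.abs {t t' : Lam} (h : BetaStar t t') : BetaStar (Lam.abs t) (Lam.abs t') :=
  ReflTransGen.lift Lam.abs (fun _ _ => Beta.abs) _ _ h

theorem BetaStar.lift {t t' : Lam} (d : ℕ) (h : BetaStar t t') :
    BetaStar (Lam.lift d t) (Lam.lift d t') :=
  ReflTransGen.lift (Lam.lift d) (fun _ _ h => h.lift d) _ _ h

theorem BetaStar.subst_left {t t' : Lam} (k : ℕ) (u : Lam) (h : BetaStar t t') :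
    BetaStar (Lam.subst t k u) (Lam.subst t' k u) :=
  ReflTransGen.lift (Lam.subst · k u) (fun _ _ h => h.subst_left k u) _ _ h

theorem BetaStar.subst_right : ∀ (t : Lam) (k : ℕ) {u u' : Lam}, BetaStar u u' →
    BetaStar (Lam.subst t k u) (Lam.subst t k u')
  | var n, k, u, u', h => by
      simp only [subst]; split_ifs
      exacts [ReflTransGen.refl, h, ReflTransGen.refl]
  | .app s t, k, _, _, h => (subst_right s k h).app (subst_right t k h)
  | .abs t, k, _, _, h => (subst_right t (k + 1) (h.lift 0)).abs

theorem BetaStar.subst {t t' u u' : Lam} (k : ℕ) (h₁ : BetaStar t t') (h₂ : BetaStar u u') :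
    BetaStar (Lam.subst t k u) (Lam.subst t' k u') :=
  (h₁.subst_left k u).trans (subst_right t' k h₂)

/-! ### Confluence -/

inductive ParRed : Lam → Lam → Prop
  | var (n : ℕ) : ParRed (var n) (var n)
  | app {s s' t t' : Lam} : ParRed s s' → ParRed t t' → ParRed (app s t) (app s' t')
  | abs {t t' : Lam} : ParRed t t' → ParRed (abs t) (abs t')
  | beta {s s' t t' : Lam} : ParRed s s' → ParRed t t' → ParRed (app (abs s) t) (subst s' 0 t')

theorem ParRed.refl : ∀ t : Lam, ParRed t t
  | .var n => .var n
  | .app s t => .app (refl s) (refl t)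
  | .abs t => .abs (refl t)

theorem Beta.parRed {t u : Lam} (h : Beta t u) : ParRed t u := by
  induction h with
  | beta B C => exact .beta (.refl B) (.refl C)
  | appL t _ ih => exact .app ih (.refl t)
  | appR s _ ih => exact .app (.refl s) ih
  | abs _ ih => exact .abs ih

theorem ParRed.betaStar {t u : Lam} (h : ParRed t u) : BetaStar t u := by
  induction h with
  | var n => exact ReflTransGen.refl
  | app _ _ ihs iht => exact ihs.app iht
  | abs _ iht => exact iht.abs
  | beta _ _ ihs iht => exact (ihs.abs.app iht).tail (Beta.beta _ _)

theorem ParRed.lift {t t' : Lam} (h : ParRed t t') (d : ℕ) :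
    ParRed (Lam.lift d t) (Lam.lift d t') := by
  induction h generalizing d with
  | var n => simp only [Lam.lift]; split_ifs <;> apply ParRed.var
  | app _ _ ihs iht => exact .app (ihs d) (iht d)
  | abs _ iht => exact .abs (iht (d + 1))
  | beta _ _ ihs iht =>
      simpa [lift_subst_of_ge _ _ (Nat.zero_le d)] using ParRed.beta (ihs (d + 1)) (iht d)

theorem ParRed.subst {t t' u u' : Lam} (h : ParRed t t') (k : ℕ) (hu : ParRed u u') :
    ParRed (Lam.subst t k u) (Lam.subst t' k u') := by
  induction h generalizing k u u' with
  | var n => simp only [Lam.subst]; split_ifs <;> first | apply ParRed.var | exact hu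
  | app _ _ ihs iht => exact .app (ihs k hu) (iht k hu)
  | abs _ iht => exact .abs (iht (k + 1) (hu.lift 0))
  | beta _ _ ihs iht =>
      simpa [subst_subst_zero] using ParRed.beta (ihs (k + 1) (hu.lift 0)) (iht k hu)

def completeDev : Lam → Lam
  | var n => var n
  | abs t => abs (completeDev t)
  | app (abs s) t => subst (completeDev s) 0 (completeDev t)
  | app s t => app (completeDev s) (completeDev t)

theorem ParRed.completeDev {t u : Lam} (h : ParRed t u) : ParRed u (completeDev t) := by
  induction h with
  | var n => exact .var n
  | abs _ iht => exact .abs iht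
  | @app s s' t t' hs ht ihs iht =>
      cases hs with
      | abs hs₀ =>
          cases ihs with
          | abs h' => exact .beta h' iht
      | var n => exact .app ihs iht
      | app => exact .app ihs iht
      | beta => exact .app ihs iht
  | beta _ _ ihs iht => exact ihs.subst 0 iht

theorem betaStar_iff_reflTransGen_parRed {t u : Lam} :
    BetaStar t u ↔ ReflTransGen ParRed t u :=
  ⟨ReflTransGen.mono (fun _ _ => Beta.parRed) _ _,
    reflTransGen_closed (fun _ _ => ParRed.betaStar) _ _⟩

theorem BetaStar.join {t u v : Lam} (h₁ : BetaStar t u) (h₂ : BetaStar t v) :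
    ∃ w, BetaStar u w ∧ BetaStar v w := by
  simp only [betaStar_iff_reflTransGen_parRed] at *
  exact church_rosser
    (fun t _ _ hu hv => ⟨completeDev t, .single hu.completeDev, .single hv.completeDev⟩) h₁ h₂

theorem Conv.exists_betaStar {M N : Lam} (h : Conv M N) : ∃ L, BetaStar M L ∧ BetaStar N L := by
  induction h with
  | rel h => exact ⟨_, .single h, .refl⟩
  | refl s => exact ⟨s, .refl, .refl⟩
  | symm _ ih => obtain ⟨L, h₁, h₂⟩ := ih; exact ⟨L, h₂, h₁⟩
  | trans _ _ ih₁ ih₂ =>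
      obtain ⟨L₁, h₁, h₂⟩ := ih₁
      obtain ⟨L₂, h₃, h₄⟩ := ih₂
      obtain ⟨L, h₅, h₆⟩ := h₂.join h₃
      exact ⟨L, h₁.trans h₅, h₄.trans h₆⟩

/-! ### Head reduction -/

@[simp]
theorem appList_nil (M : Lam) : appList M [] = M := rfl

@[simp]
theorem appList_append_singleton (M a : Lam) (L : List Lam) :
    appList M (L ++ [a]) = app (appList M L) a := by
  simp [appList]

theorem mkHnf_succ (n y : ℕ) (args : List Lam) :
    mkHnf (n + 1) y args = abs (mkHnf n y args) := rfl

theorem not_isAbs_appList_var (y : ℕ) (args : List Lam) : ¬ IsAbs (appList (var y) args) := by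
  induction args using List.reverseRecOn with
  | nil => exact id
  | append_singleton L a _ => rw [appList_append_singleton]; exact id

theorem appList_var_ne_abs (y : ℕ) (args : List Lam) (A : Lam) : appList (var y) args ≠ abs A :=
  fun h => not_isAbs_appList_var y args (h ▸ trivial)

theorem eq_nil_of_appList_var_eq_var {args : List Lam} {y x : ℕ}
    (h : appList (var y) args = var x) : args = [] ∧ y = x := by
  induction args using List.reverseRecOn with
  | nil => simpa using h
  | append_singleton L a _ => simp at h

theorem exists_of_appList_var_eq_app {args : List Lam} {y : ℕ} {A B : Lam}
    (h : appList (var y) args = app A B) : ∃ L, args = L ++ [B] ∧ A = appList (var y) L := by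
  induction args using List.reverseRecOn with
  | nil => simp at h
  | append_singleton L a _ =>
      simp only [appList_append_singleton, app.injEq] at h
      exact ⟨L, by rw [h.2], h.1.symm⟩

theorem appList_var_inj {args args' : List Lam} {y y' : ℕ}
    (h : appList (var y) args = appList (var y') args') : y = y' ∧ args = args' := by
  induction args using List.reverseRecOn generalizing args' with
  | nil =>
      obtain ⟨rfl, rfl⟩ := eq_nil_of_appList_var_eq_var h.symm
      exact ⟨rfl, rfl⟩
  | append_singleton L a ih =>
      rw [appList_append_singleton] at h
      obtain ⟨L', rfl, hL⟩ := exists_of_appList_var_eq_app h.symm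
      obtain ⟨rfl, rfl⟩ := ih hL
      simp_all

theorem mkHnf_inj {n n' y y' : ℕ} {args args' : List Lam}
    (h : mkHnf n y args = mkHnf n' y' args') : n = n' ∧ y = y' ∧ args = args' := by
  induction n generalizing n' with
  | zero =>
      cases n' with
      | zero => exact ⟨rfl, appList_var_inj h⟩
      | succ n' => exact absurd h (appList_var_ne_abs y args _)
  | succ n ih =>
      cases n' with
      | zero => exact absurd h.symm (appList_var_ne_abs y' args' _)
      | succ n' =>
          obtain ⟨rfl, h'⟩ := ih (abs.inj h)
          exact ⟨rfl, h'⟩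

theorem not_headStep_appList_var (y : ℕ) (args : List Lam) (X : Lam) :
    ¬ HeadStep (appList (var y) args) X := by
  induction args using List.reverseRecOn generalizing X with
  | nil => nofun
  | append_singleton L a ih =>
      rw [appList_append_singleton]
      generalize hL : appList (var y) L = L' at ih
      rintro (_ | ⟨_, _, h⟩)
      · exact appList_var_ne_abs y L _ hL
      · exact ih _ h

theorem IsHnf.not_headStep {H X : Lam} (h : IsHnf H) : ¬ HeadStep H X := by
  obtain ⟨n, y, args, rfl⟩ := h
  induction n generalizing X with
  | zero => exact not_headStep_appList_var y args X
  | succ n ih => rintro (_ | _ | h); exact ih h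

theorem HeadStep.det {M A B : Lam} (h₁ : HeadStep M A) (h₂ : HeadStep M B) : A = B := by
  induction h₁ generalizing B with
  | beta => cases h₂ with
    | beta => rfl
    | app _ hna _ => exact absurd trivial hna
  | app t hna _ ih => cases h₂ with
    | beta => exact absurd trivial hna
    | app _ _ h' => rw [ih h']
  | abs _ ih => cases h₂ with
    | abs h' => rw [ih h']

theorem HeadStep.to_beta {s s' : Lam} (h : HeadStep s s') : Beta s s' := by
  induction h with
  | beta t u => exact .beta t u
  | app t _ _ ih => exact .appL t ih
  | abs _ ih => exact .abs ih

theorem HeadStep.subst {t t' : Lam} (h : HeadStep t t') (k : ℕ) (u : Lam) :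
    HeadStep (Lam.subst t k u) (Lam.subst t' k u) := by
  induction h generalizing k u with
  | beta B C => simpa [subst_subst_zero] using HeadStep.beta _ _
  | app t hna hs ih =>
      refine .app _ ?_ (ih k u)
      cases hs with
      | abs => exact absurd trivial hna
      | _ => exact id
  | abs _ ih => exact .abs (ih (k + 1) (lift 0 u))

theorem HeadSteps.trans {j k : ℕ} {M N P : Lam} (h₁ : HeadSteps j M N) (h₂ : HeadSteps k N P) :
    HeadSteps (j + k) M P := by
  induction j generalizing M with
  | zero => cases h₁; simpa using h₂
  | succ j ih =>
      obtain ⟨u, hu, h₁'⟩ := h₁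
      rw [Nat.add_right_comm]
      exact ⟨u, hu, ih h₁'⟩

theorem HeadSteps.abs {k : ℕ} {M N : Lam} (h : HeadSteps k M N) :
    HeadSteps k (Lam.abs M) (Lam.abs N) := by
  induction k generalizing M with
  | zero => cases h; rfl
  | succ k ih => obtain ⟨u, hu, h'⟩ := h; exact ⟨_, .abs hu, ih h'⟩

theorem HeadSteps.isAbs {k : ℕ} {u v : Lam} (h : HeadSteps k u v) (ha : IsAbs u) : IsAbs v := by
  induction k generalizing u with
  | zero => cases h; exact ha
  | succ k ih =>
      obtain ⟨w, hw, h'⟩ := h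
      refine ih h' ?_
      cases hw with
      | abs => trivial
      | _ => exact ha.elim

theorem HeadSteps.app_left {j : ℕ} {s s₁ : Lam} (t : Lam) (h : HeadSteps j s s₁)
    (hna : ¬ IsAbs s₁) : HeadSteps j (app s t) (app s₁ t) := by
  induction j generalizing s with
  | zero => cases h; rfl
  | succ j ih =>
      obtain ⟨u, hu, h'⟩ := h
      have hns : ¬ IsAbs s := fun habs => hna (HeadSteps.isAbs (k := j + 1) ⟨u, hu, h'⟩ habs)
      exact ⟨app u t, .app t hns hu, ih h'⟩

theorem exists_headSteps_of_reflTransGen {M N : Lam} (h : ReflTransGen HeadStep M N) :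
    ∃ k, HeadSteps k M N := by
  induction h using ReflTransGen.head_induction_on with
  | refl => exact ⟨0, rfl⟩
  | head hs _ ih => obtain ⟨k, hk⟩ := ih; exact ⟨k + 1, _, hs, hk⟩

theorem HeadSteps.eq_of_mkHnf {M : Lam} {k n y k₁ n₁ y₁ : ℕ} {args args₁ : List Lam}
    (h₁ : HeadSteps k₁ M (mkHnf n₁ y₁ args₁)) (h : HeadSteps k M (mkHnf n y args)) :
    k₁ = k ∧ n₁ = n ∧ y₁ = y ∧ args₁ = args := by
  induction k₁ generalizing M k with
  | zero =>
      cases h₁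
      cases k with
      | zero => exact ⟨rfl, mkHnf_inj h⟩
      | succ k => obtain ⟨u, hu, -⟩ := h; exact absurd hu (IsHnf.not_headStep ⟨_, _, _, rfl⟩)
  | succ k₁ ih =>
      obtain ⟨u, hu, h₁'⟩ := h₁
      cases k with
      | zero => cases h; exact absurd hu (IsHnf.not_headStep ⟨_, _, _, rfl⟩)
      | succ k =>
          obtain ⟨u', hu', h'⟩ := h
          obtain rfl := hu.det hu'
          obtain ⟨rfl, h⟩ := ih h₁' h'
          exact ⟨rfl, h⟩

theorem HasHnf.abs {t : Lam} (h : HasHnf t) : HasHnf (abs t) := by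
  obtain ⟨k, H, hk, n, y, args, rfl⟩ := h
  exact ⟨k, _, hk.abs, n + 1, y, args, rfl⟩

theorem HasHnf.of_headSteps {j : ℕ} {M N : Lam} (h : HeadSteps j M N) (hN : HasHnf N) :
    HasHnf M := by
  obtain ⟨k, H, hk, hH⟩ := hN
  exact ⟨j + k, H, h.trans hk, hH⟩

theorem SimpleHeadStep.headStep {M A : Lam} (h : SimpleHeadStep M A) : HeadStep M A := by
  induction h with
  | beta t u _ => exact .beta t u
  | app t hna _ ih => exact .app t hna ih
  | abs _ ih => exact .abs ih

theorem SimpleTerm.exists_simpleHeadSteps_mkHnf {M : Lam} (hM : SimpleTerm M) (hH : HasHnf M) :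
    ∃ n y args, ReflTransGen SimpleHeadStep M (mkHnf n y args) ∧ ∀ A ∈ args, SimpleTerm A := by
  obtain ⟨X, hXM, hX⟩ := hM
  obtain h | ⟨n, y, args, hred, hargs⟩ := hX M hXM
  · exact absurd hH h
  · exact ⟨n, y, args, hred, fun A hA => ⟨X, hargs A hA, hX⟩⟩

/-! ### Standardisation -/

inductive WeakHeadStep : Lam → Lam → Prop
  | beta (t u : Lam) : WeakHeadStep (app (abs t) u) (subst t 0 u)
  | app {s s' : Lam} (t : Lam) : WeakHeadStep s s' → WeakHeadStep (app s t) (app s' t)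

/-- Standard reduction, in Kashima's inductive presentation. -/
inductive Standard : Lam → Lam → Prop
  | var {M : Lam} {x : ℕ} : ReflTransGen WeakHeadStep M (var x) → Standard M (var x)
  | app {M s t s' t' : Lam} : ReflTransGen WeakHeadStep M (app s t) →
      Standard s s' → Standard t t' → Standard M (app s' t')
  | abs {M t t' : Lam} : ReflTransGen WeakHeadStep M (abs t) → Standard t t' →
      Standard M (abs t')

namespace WeakHeadStep

theorem exists_eq_app {s s' : Lam} (h : WeakHeadStep s s') : ∃ a b, s = Lam.app a b := by
  cases h <;> exact ⟨_, _, rfl⟩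

theorem headStep {s s' : Lam} (h : WeakHeadStep s s') : HeadStep s s' := by
  induction h with
  | beta t u => exact .beta t u
  | app t h ih =>
      obtain ⟨a, b, rfl⟩ := h.exists_eq_app
      exact .app t id ih

theorem lift {t t' : Lam} (h : WeakHeadStep t t') (d : ℕ) :
    WeakHeadStep (Lam.lift d t) (Lam.lift d t') := by
  induction h generalizing d with
  | beta B C => simpa [lift_subst_of_ge B C (Nat.zero_le d)] using beta _ _
  | app t _ ih => exact .app _ (ih d)

theorem subst {t t' : Lam} (h : WeakHeadStep t t') (k : ℕ) (u : Lam) :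
    WeakHeadStep (Lam.subst t k u) (Lam.subst t' k u) := by
  induction h generalizing k u with
  | beta B C => simpa [subst_subst_zero] using beta _ _
  | app t _ ih => exact .app _ (ih k u)

end WeakHeadStep

theorem HeadSteps.betaStar {k : ℕ} {M N : Lam} (h : HeadSteps k M N) : BetaStar M N := by
  induction k generalizing M with
  | zero => cases h; exact .refl
  | succ k ih => obtain ⟨u, hu, h'⟩ := h; exact .head hu.to_beta (ih h')

theorem exists_headSteps_of_weakHeadSteps {M N : Lam} (h : ReflTransGen WeakHeadStep M N) :
    ∃ k, HeadSteps k M N :=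
  exists_headSteps_of_reflTransGen (ReflTransGen.mono (fun _ _ => WeakHeadStep.headStep) _ _ h)

namespace Standard

theorem refl : ∀ M : Lam, Standard M M
  | .var _ => .var .refl
  | .app s t => .app .refl (refl s) (refl t)
  | .abs t => .abs .refl (refl t)

theorem head {M N L : Lam} (h₁ : ReflTransGen WeakHeadStep M N) (h₂ : Standard N L) :
    Standard M L := by
  cases h₂ with
  | var h => exact .var (h₁.trans h)
  | app h hs ht => exact .app (h₁.trans h) hs ht
  | abs h ht => exact .abs (h₁.trans h) ht

theorem lift {t t' : Lam} (h : Standard t t') (d : ℕ) :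
    Standard (Lam.lift d t) (Lam.lift d t') := by
  have hw : ∀ d {M N}, ReflTransGen WeakHeadStep M N →
      ReflTransGen WeakHeadStep (Lam.lift d M) (Lam.lift d N) := fun d =>
    ReflTransGen.lift (Lam.lift d) (fun _ _ h => h.lift d) _ _
  induction h generalizing d with
  | var h =>
      have h₂ := hw d h
      simp only [Lam.lift] at h₂ ⊢
      split_ifs at h₂ ⊢ <;> exact .var h₂
  | app h _ _ ihs iht => exact .app (hw d h) (ihs d) (iht d)
  | abs h _ iht => exact .abs (hw d h) (iht (d + 1))

theorem subst {A A' u u' : Lam} (h : Standard A A') (k : ℕ) (hu : Standard u u') :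
    Standard (Lam.subst A k u) (Lam.subst A' k u') := by
  have hw : ∀ k u {M N}, ReflTransGen WeakHeadStep M N →
      ReflTransGen WeakHeadStep (Lam.subst M k u) (Lam.subst N k u) := fun k u =>
    ReflTransGen.lift (Lam.subst · k u) (fun _ _ h => WeakHeadStep.subst h k u) _ _
  induction h generalizing k u u' with
  | var h =>
      have h₂ := hw k u h
      simp only [Lam.subst] at h₂ ⊢
      split_ifs at h₂ ⊢
      exacts [.var h₂, hu.head h₂, .var h₂]
  | app h _ _ ihs iht => exact .app (hw k u h) (ihs k hu) (iht k hu)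
  | abs h _ iht => exact .abs (hw k u h) (iht (k + 1) (hu.lift 0))

theorem tail {M N N' : Lam} (h : Standard M N) (hN : Beta N N') : Standard M N' := by
  induction h generalizing N' with
  | var h => cases hN
  | @app M s t s' t' h hs ht ihs iht =>
      cases hN with
      | beta B C =>
          cases hs with | abs h₀ hB =>
          have hred : ReflTransGen WeakHeadStep M (Lam.subst _ 0 t) :=
            h.trans ((ReflTransGen.lift (Lam.app · t) (fun _ _ => WeakHeadStep.app t) _ _ h₀).tail
              (.beta _ _))
          exact head hred (hB.subst 0 ht)
      | appL _ hs' => exact .app h (ihs hs') ht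
      | appR _ ht' => exact .app h hs (iht ht')
  | abs h _ iht =>
      cases hN with
      | abs ht' => exact .abs h (iht ht')

end Standard

theorem BetaStar.standard {M N : Lam} (h : BetaStar M N) : Standard M N := by
  induction h with
  | refl => exact .refl M
  | tail _ h₂ ih => exact ih.tail h₂

theorem Standard.exists_headSteps_appList_var {M : Lam} {y : ℕ} {args' : List Lam}
    (h : Standard M (appList (Lam.var y) args')) :
    ∃ j args, HeadSteps j M (appList (Lam.var y) args) := by
  generalize hX : appList (Lam.var y) args' = X at h
  induction h generalizing args' with
  | var h =>
      obtain ⟨rfl, rfl⟩ := eq_nil_of_appList_var_eq_var hX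
      obtain ⟨j, hj⟩ := exists_headSteps_of_weakHeadSteps h
      exact ⟨j, [], hj⟩
  | @app M s t s' t' h hs ht ihs iht =>
      obtain ⟨L, rfl, hA⟩ := exists_of_appList_var_eq_app hX
      obtain ⟨j, args₀, hj⟩ := ihs hA.symm
      obtain ⟨i, hi⟩ := exists_headSteps_of_weakHeadSteps h
      refine ⟨i + j, args₀ ++ [t], ?_⟩
      simpa using hi.trans (hj.app_left t (not_isAbs_appList_var y args₀))
  | abs => exact absurd hX (appList_var_ne_abs _ _ _)

theorem Standard.hasHnf {n y : ℕ} {M : Lam} {args' : List Lam}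
    (h : Standard M (mkHnf n y args')) : HasHnf M := by
  induction n generalizing M with
  | zero =>
      obtain ⟨j, args, hj⟩ := h.exists_headSteps_appList_var
      exact ⟨j, _, hj, 0, y, args, rfl⟩
  | succ n ih =>
      rw [mkHnf_succ] at h
      cases h with | abs h₀ hA =>
      obtain ⟨j, hj⟩ := exists_headSteps_of_weakHeadSteps h₀
      exact (ih hA).abs.of_headSteps hj

theorem HasHnf.of_betaStar {M N : Lam} (h : BetaStar M N) (hN : HasHnf N) : HasHnf M := by
  obtain ⟨k, H, hk, n, y, args, rfl⟩ := hN
  exact BetaStar.standard (h.trans hk.betaStar) |>.hasHnf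

/-! ### Reduction with a budget -/

/-- `CostRed T M L`: a reduction from `M` to `L` whose weak head steps are paid from the
budget `T`. A substitution `P[k := Q]` adds up the costs of `P` and `Q` only if it does not
duplicate `Q` or `Q` is normal (and then reduces no further), so no cost is paid twice. -/
inductive CostRed : ℕ → Lam → Lam → Prop
  | var (x : ℕ) : CostRed 0 (var x) (var x)
  | app {b c : ℕ} {s t s' t' : Lam} :
      CostRed b s s' → CostRed c t t' → CostRed (b + c) (app s t) (app s' t')
  | abs {b : ℕ} {t t' : Lam} : CostRed b t t' → CostRed b (abs t) (abs t')
  | head {b : ℕ} {M N L : Lam} : WeakHeadStep M N → CostRed b N L → CostRed (b + 1) M L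
  | subst {b c k : ℕ} {P P' Q Q' : Lam} : CostRed b P P' → CostRed c Q Q' →
      (occ k P ≤ 1 ∨ IsNormalForm Q) → CostRed (b + c) (subst P k Q) (subst P' k Q')

namespace CostRed

theorem refl : ∀ M : Lam, CostRed 0 M M
  | .var n => .var n
  | .app s t => by simpa using (refl s).app (refl t)
  | .abs t => .abs (refl t)

theorem betaStar {T : ℕ} {M L : Lam} (h : CostRed T M L) : BetaStar M L := by
  induction h with
  | var x => exact .refl
  | app _ _ ihs iht => exact ihs.app iht
  | abs _ iht => exact iht.abs
  | head h _ ih => exact .head (WeakHeadStep.headStep h).to_beta ih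
  | subst _ _ _ ihP ihQ => exact .subst _ ihP ihQ

theorem of_weakHeadSteps {b : ℕ} {M N L : Lam} (h₁ : ReflTransGen WeakHeadStep M N)
    (h₂ : CostRed b N L) : ∃ b', CostRed b' M L := by
  induction h₁ using ReflTransGen.head_induction_on with
  | refl => exact ⟨b, h₂⟩
  | head hs _ ih => obtain ⟨b', h'⟩ := ih; exact ⟨b' + 1, .head hs h'⟩

theorem lift {T : ℕ} {t t' : Lam} (h : CostRed T t t') (d : ℕ) :
    CostRed T (Lam.lift d t) (Lam.lift d t') := by
  induction h generalizing d with
  | var x => exact refl _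
  | app _ _ ihs iht => exact .app (ihs d) (iht d)
  | abs _ iht => exact .abs (iht (d + 1))
  | head h _ ih => exact .head (h.lift d) (ih d)
  | @subst b c k P P' Q Q' _ _ hcond ihP ihQ =>
      have hQ : IsNormalForm Q → IsNormalForm (Lam.lift d Q) := isNormalForm_lift_iff.2
      rcases Nat.lt_or_ge k d with hk | hk
      · rw [lift_subst_of_ge P Q hk.le, lift_subst_of_ge P' Q' hk.le]
        rw [← occ_lift_of_lt P (by omega : k < d + 1)] at hcond
        exact .subst (ihP (d + 1)) (ihQ d) (hcond.imp id hQ)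
      · rw [lift_subst_of_le P Q hk, lift_subst_of_le P' Q' hk]
        rw [← occ_lift_of_le P hk] at hcond
        exact .subst (ihP d) (ihQ d) (hcond.imp id hQ)

end CostRed

theorem Standard.costRed {M L : Lam} (h : Standard M L) : ∃ T, CostRed T M L := by
  induction h with
  | @var M x h => exact CostRed.of_weakHeadSteps h (.var x)
  | app h _ _ ihs iht =>
      obtain ⟨b, hb⟩ := ihs
      obtain ⟨c, hc⟩ := iht
      exact CostRed.of_weakHeadSteps h (hb.app hc)
  | abs h _ iht => obtain ⟨b, hb⟩ := iht; exact CostRed.of_weakHeadSteps h hb.abs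

theorem BetaStar.exists_costRed {M L : Lam} (h : BetaStar M L) : ∃ T, CostRed T M L :=
  h.standard.costRed

theorem SimpleHeadStep.of_subst {P P₁ Q : Lam} {k : ℕ} (h : HeadStep P P₁)
    (hs : SimpleHeadStep (subst P k Q) (subst P₁ k Q)) : SimpleHeadStep P P₁ := by
  induction h generalizing k Q with
  | beta B C =>
      simp only [subst, subst_subst_zero] at hs
      generalize hB : subst B (k + 1) (lift 0 Q) = B' at hs
      generalize hT : subst B' 0 (subst C k Q) = T at hs
      cases hs with
      | beta _ _ hcond =>
          rw [← hB, occ_zero_subst_succ_lift] at hcond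
          exact .beta B C (hcond.imp id IsNormalForm.of_subst)
      | app _ hna _ => exact absurd trivial hna
  | app t hna hstep ih =>
      cases hstep with
      | abs => exact absurd trivial hna
      | _ =>
          simp only [subst] at hs
          cases hs with
          | app _ _ h' => exact .app t id (ih h')
  | abs _ ih =>
      simp only [subst] at hs
      cases hs with
      | abs h' => exact .abs (ih h')

theorem WeakHeadStep.occ_eq_zero {P W : Lam} {k : ℕ} (h : WeakHeadStep P W)
    (h₀ : occ k P = 0) : occ k W = 0 := by
  induction h with
  | beta B C =>
      simp only [occ] at h₀
      rw [occ_subst_of_le B C (Nat.zero_le k)]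
      simp [show occ k C = 0 by omega, show occ (k + 1) B = 0 by omega]
  | app t _ ih =>
      simp only [occ, Nat.add_eq_zero_iff] at h₀ ⊢
      exact ⟨ih h₀.1, h₀.2⟩

/-- The step can copy `Q` only by contracting a redex whose argument contains `Q`; since
that redex is simple, it is linear or its argument, and hence `Q`, is normal. -/
theorem WeakHeadStep.occ_le_one_of_subst {P W Q : Lam} {k : ℕ} (h : WeakHeadStep P W)
    (hs : SimpleHeadStep (Lam.subst P k Q) (Lam.subst W k Q)) (hocc : occ k P ≤ 1) :
    occ k W ≤ 1 ∨ IsNormalForm Q := by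
  induction h with
  | beta B C =>
      simp only [occ] at hocc
      simp only [Lam.subst, subst_subst_zero] at hs
      generalize hB : Lam.subst B (k + 1) (Lam.lift 0 Q) = B' at hs
      generalize hT : Lam.subst B' 0 (Lam.subst C k Q) = T at hs
      rw [occ_subst_of_le B C (Nat.zero_le k)]
      cases hs with
      | beta _ _ hcond =>
          rw [← hB, occ_zero_subst_succ_lift] at hcond
          rcases Nat.eq_zero_or_pos (occ k C) with hC | hC
          · left; simp [hC]; omega
          · rcases hcond with h₁ | h₁
            · left; nlinarith
            · exact .inr (IsNormalForm.of_subst_of_occ_pos hC h₁)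
      | app _ hna _ => exact absurd trivial hna
  | @app P₁ W₁ t hstep ih =>
      simp only [occ] at hocc ⊢
      obtain ⟨a, b, rfl⟩ := hstep.exists_eq_app
      simp only [Lam.subst] at hs
      cases hs with
      | app _ _ h' =>
          rcases Nat.eq_zero_or_pos (occ k t) with h₂ | h₂
          · exact (ih h' (by omega)).imp (by omega) id
          · have := hstep.occ_eq_zero (k := k) (by omega)
            omega

namespace CostRed

theorem var_inv {T : ℕ} {x : ℕ} {L : Lam} (h : CostRed T (Lam.var x) L) : L = Lam.var x := by
  generalize hM : Lam.var x = M at h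
  induction h generalizing x with
  | var y => rfl
  | app | abs => cases hM
  | head h => subst hM; obtain ⟨_, _, h'⟩ := h.exists_eq_app; cases h'
  | @subst b c k P P' Q Q' hP hQ hcond ihP ihQ =>
      cases P with
      | var m =>
          obtain rfl := ihP rfl
          simp only [Lam.subst] at hM ⊢
          split_ifs at hM ⊢
          exacts [rfl, ihQ hM, rfl]
      | app | abs => simp at hM

theorem abs_inv {T : ℕ} {A L : Lam} (h : CostRed T (Lam.abs A) L) :
    ∃ A' b, b ≤ T ∧ L = Lam.abs A' ∧ CostRed b A A' := by
  generalize hM : Lam.abs A = M at h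
  induction h generalizing A with
  | var | app => cases hM
  | @abs b t t' ht => cases hM; exact ⟨t', b, le_rfl, rfl, ht⟩
  | head h => subst hM; obtain ⟨_, _, h'⟩ := h.exists_eq_app; cases h'
  | @subst b c k P P' Q Q' hP hQ hcond ihP ihQ =>
      cases P with
      | var m =>
          obtain rfl := hP.var_inv
          simp only [Lam.subst] at hM ⊢
          split_ifs at hM ⊢
          obtain ⟨A', b', hb', hL, hE⟩ := ihQ hM
          exact ⟨A', b', by omega, hL, hE⟩
      | app => simp at hM
      | abs P₀ =>
          simp only [Lam.subst, abs.injEq] at hM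
          subst hM
          obtain ⟨P₀', b', hb', rfl, hE⟩ := ihP rfl
          refine ⟨Lam.subst P₀' (k + 1) (Lam.lift 0 Q'), b' + c, by omega, rfl, ?_⟩
          exact .subst hE (hQ.lift 0) (hcond.imp id isNormalForm_lift_iff.2)

theorem eq_of_isNormalForm {T : ℕ} {Q Q' : Lam} (h : CostRed T Q Q') (hQ : IsNormalForm Q) :
    Q' = Q :=
  hQ.eq_of_betaStar h.betaStar

/-- Linearity puts `Q` into at most one side; otherwise `Q` is normal and costs nothing. -/
theorem subst_app {b₁ b₂ c k : ℕ} {P₁ P₂ P₁' P₂' Q Q' : Lam} (h₁ : CostRed b₁ P₁ P₁')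
    (h₂ : CostRed b₂ P₂ P₂') (hQ : CostRed c Q Q')
    (hcond : occ k (Lam.app P₁ P₂) ≤ 1 ∨ IsNormalForm Q) :
    ∃ c₁ c₂, c₁ + c₂ ≤ b₁ + b₂ + c ∧ CostRed c₁ (Lam.subst P₁ k Q) (Lam.subst P₁' k Q') ∧
      CostRed c₂ (Lam.subst P₂ k Q) (Lam.subst P₂' k Q') := by
  rcases hcond with hocc | hnf
  · simp only [occ] at hocc
    by_cases h0 : occ k P₂ = 0
    · refine ⟨b₁ + c, b₂ + 0, by omega, .subst h₁ hQ (.inl (by omega)), ?_⟩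
      rw [subst_congr_of_occ_eq_zero Q Q' h0]
      exact .subst h₂ (refl Q') (.inl (by omega))
    · refine ⟨b₁ + 0, b₂ + c, by omega, ?_, .subst h₂ hQ (.inl (by omega))⟩
      rw [subst_congr_of_occ_eq_zero Q Q' (by omega : occ k P₁ = 0)]
      exact .subst h₁ (refl Q') (.inl (by omega))
  · obtain rfl := hQ.eq_of_isNormalForm hnf
    exact ⟨b₁ + c, b₂ + 0, by omega, .subst h₁ hQ (.inr hnf), .subst h₂ (refl _) (.inr hnf)⟩

/-- Simplicity of the head step keeps the side condition of `CostRed.subst` valid when a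
weak head step happens inside a substitution instance. -/
theorem app_inv {T : ℕ} {U V L : Lam} (h : CostRed T (Lam.app U V) L)
    (hs : ∀ W, HeadStep (Lam.app U V) W → SimpleHeadStep (Lam.app U V) W) :
    (∃ U' V' b c, L = Lam.app U' V' ∧ b + c ≤ T ∧ CostRed b U U' ∧ CostRed c V V') ∨
    (∃ W b, WeakHeadStep (Lam.app U V) W ∧ CostRed b W L ∧ b + 1 ≤ T) := by
  generalize hM : Lam.app U V = M at h hs
  induction h generalizing U V with
  | var | abs => cases hM
  | @app b c s t s' t' hs' ht' =>
      cases hM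
      exact .inl ⟨s', t', b, c, rfl, le_rfl, hs', ht'⟩
  | @head b M' N L' h hE => subst hM; exact .inr ⟨N, b, h, hE, le_rfl⟩
  | @subst b c k P P' Q Q' hP hQ hcond ihP ihQ =>
      cases P with
      | var m =>
          obtain rfl := hP.var_inv
          simp only [Lam.subst] at hM hs ⊢
          split_ifs at hM hs ⊢
          subst hM
          refine (ihQ rfl hs).imp ?_ ?_
          · rintro ⟨U', V', b₁, c₁, hL, hbc, hE₁, hE₂⟩
            exact ⟨U', V', b₁, c₁, hL, by omega, hE₁, hE₂⟩
          · rintro ⟨W, b₁, hW, hE₁, hb₁⟩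
            exact ⟨W, b₁, hW, hE₁, by omega⟩
      | abs => simp at hM
      | app P₁ P₂ =>
          simp only [Lam.subst, app.injEq] at hM
          obtain ⟨rfl, rfl⟩ := hM
          have hsP : ∀ W, HeadStep (Lam.app P₁ P₂) W → SimpleHeadStep (Lam.app P₁ P₂) W :=
            fun W hW => SimpleHeadStep.of_subst hW (hs _ (hW.subst k Q))
          rcases ihP rfl hsP with ⟨P₁', P₂', b₁, b₂, rfl, hbb, h₁, h₂⟩ | ⟨W, b₀, hW, hEW, hb₀⟩
          · obtain ⟨c₁, c₂, hc, hE₁, hE₂⟩ := subst_app h₁ h₂ hQ hcond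
            exact .inl ⟨_, _, c₁, c₂, rfl, by omega, hE₁, hE₂⟩
          · have hcond' : occ k W ≤ 1 ∨ IsNormalForm Q := by
              rcases hcond with h₁ | h₁
              · exact hW.occ_le_one_of_subst (hs _ (hW.subst k Q).headStep) h₁
              · exact .inr h₁
            exact .inr ⟨_, b₀ + c, hW.subst k Q, .subst hEW hQ hcond', by omega⟩

end CostRed

open Finset

inductive CostRedList : ℕ → List Lam → List Lam → Prop
  | nil : CostRedList 0 [] []
  | cons {b c : ℕ} {A A' : Lam} {L L' : List Lam} :
      CostRed b A A' → CostRedList c L L' → CostRedList (b + c) (A :: L) (A' :: L')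

namespace CostRedList

theorem append_singleton {S b : ℕ} {L L' : List Lam} {A A' : Lam} (h : CostRedList S L L')
    (hA : CostRed b A A') : CostRedList (S + b) (L ++ [A]) (L' ++ [A']) := by
  induction h with
  | nil => simpa using cons hA nil
  | @cons b₁ c₁ _ _ _ _ hB _ ih => rw [Nat.add_assoc]; exact cons hB ih

theorem length_eq {S : ℕ} {L L' : List Lam} (h : CostRedList S L L') : L'.length = L.length := by
  induction h with
  | nil => rfl
  | cons _ _ ih => simp [ih]

theorem exists_cost {S : ℕ} {L L' : List Lam} (h : CostRedList S L L') :
    ∃ cost : ℕ → ℕ, ∑ i ∈ range L.length, cost i = S ∧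
      ∀ i (hi : i < L.length) (hi' : i < L'.length), CostRed (cost i) L[i] L'[i] := by
  induction h with
  | nil => exact ⟨fun _ => 0, by simp, fun i hi => by simp at hi⟩
  | @cons b c A A' L L' hA _ ih =>
      obtain ⟨cost, hsum, hcost⟩ := ih
      refine ⟨fun i => Nat.casesOn i b cost, ?_, ?_⟩
      · simp [sum_range_succ', hsum, Nat.add_comm]
      · rintro (_ | i) hi hi'
        exacts [hA, hcost i (by simpa using hi) (by simpa using hi')]

end CostRedList

theorem CostRed.appList_var_inv {args : List Lam} {T y : ℕ} {L : Lam}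
    (h : CostRed T (appList (Lam.var y) args) L) :
    ∃ args' S, S ≤ T ∧ L = appList (Lam.var y) args' ∧ CostRedList S args args' := by
  induction args using List.reverseRecOn generalizing T L with
  | nil => exact ⟨[], 0, Nat.zero_le T, h.var_inv, .nil⟩
  | append_singleton L₀ a ih =>
      have hnot := not_headStep_appList_var y (L₀ ++ [a])
      rw [appList_append_singleton] at h hnot
      rcases h.app_inv (fun W hW => absurd hW (hnot W)) with
        ⟨U', V', b, c, rfl, hbc, hU, hV⟩ | ⟨W, -, hW, -⟩
      · obtain ⟨args₀', S₀, hS₀, rfl, hargs⟩ := ih hU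
        exact ⟨args₀' ++ [V'], S₀ + c, by omega, by simp, hargs.append_singleton hV⟩
      · exact absurd hW.headStep (hnot W)

theorem CostRed.mkHnf_inv {n T y : ℕ} {args : List Lam} {L : Lam}
    (h : CostRed T (mkHnf n y args) L) :
    ∃ args' S, S ≤ T ∧ L = mkHnf n y args' ∧ CostRedList S args args' := by
  induction n generalizing T L with
  | zero => exact h.appList_var_inv
  | succ n ih =>
      obtain ⟨A', b, hb, rfl, hA⟩ := h.abs_inv
      obtain ⟨args', S, hS, rfl, hargs⟩ := ih hA
      exact ⟨args', S, by omega, rfl, hargs⟩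

/-- The conjunct `IsAbs L → IsAbs M` carries the induction through the function part of an
application, which is not an abstraction. -/
theorem CostRed.simpleHeadStep_cases {T : ℕ} {M L M₁ : Lam} (hE : CostRed T M L)
    (hstep : SimpleHeadStep M M₁) :
    (∃ T', T' + 1 ≤ T ∧ CostRed T' M₁ L) ∨
    (∃ L₁ T', HeadStep L L₁ ∧ CostRed T' M₁ L₁ ∧ T' ≤ T ∧ (IsAbs L → IsAbs M)) := by
  have hdet : ∀ W, HeadStep M W → SimpleHeadStep M W := fun W hW =>
    hW.det hstep.headStep ▸ hstep
  induction hstep generalizing T L with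
  | beta t u hcond =>
      rcases hE.app_inv hdet with ⟨U', V', b, c, rfl, hbc, hU, hV⟩ | ⟨W, b, hW, hEW, hb⟩
      · obtain ⟨A', b', hb', rfl, hA⟩ := hU.abs_inv
        exact .inr ⟨_, b' + c, .beta A' V', .subst hA hV hcond, by omega, nofun⟩
      · obtain rfl := hW.headStep.det (.beta t u)
        exact .inl ⟨b, hb, hEW⟩
  | @app s s' t hna hs ih =>
      rcases hE.app_inv hdet with ⟨U', V', b, c, rfl, hbc, hU, hV⟩ | ⟨W, b, hW, hEW, hb⟩
      · rcases ih hU (fun W hW => hW.det hs.headStep ▸ hs) with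
          ⟨T', hT', hU'⟩ | ⟨U₁, T', hUU₁, hU', hT', habs⟩
        · exact .inl ⟨T' + c, by omega, hU'.app hV⟩
        · exact .inr ⟨_, T' + c, .app V' (hna ∘ habs) hUU₁, hU'.app hV, by omega, nofun⟩
      · obtain rfl := hW.headStep.det (.app t hna hs.headStep)
        exact .inl ⟨b, hb, hEW⟩
  | abs hs ih =>
      obtain ⟨L₀, b, hb, rfl, hE₀⟩ := hE.abs_inv
      rcases ih hE₀ (fun W hW => hW.det hs.headStep ▸ hs) with
        ⟨T', hT', hE'⟩ | ⟨L₁, T', hL₁, hE', hT', -⟩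
      · exact .inl ⟨T', by omega, hE'.abs⟩
      · exact .inr ⟨_, T', .abs hL₁, hE'.abs, by omega, fun _ => trivial⟩

theorem CostRed.simulate {T n y : ℕ} {M L : Lam} {args : List Lam}
    (hred : ReflTransGen SimpleHeadStep M (mkHnf n y args)) (hE : CostRed T M L) :
    ∃ k k' args' S, HeadSteps k M (mkHnf n y args) ∧ HeadSteps k' L (mkHnf n y args') ∧
      k' ≤ k ∧ k - k' + S ≤ T ∧ CostRedList S args args' := by
  induction hred using ReflTransGen.head_induction_on generalizing T L with
  | refl =>
      obtain ⟨args', S, hS, rfl, hargs⟩ := hE.mkHnf_inv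
      exact ⟨0, 0, args', S, rfl, rfl, le_rfl, by omega, hargs⟩
  | head hstep _ ih =>
      rcases hE.simpleHeadStep_cases hstep with ⟨T', hT', hE'⟩ | ⟨L₁, T', hL₁, hE', hT', -⟩
      · obtain ⟨k, k', args', S, hk, hk', hkk, hS, hargs⟩ := ih hE'
        exact ⟨k + 1, k', args', S, ⟨_, hstep.headStep, hk⟩, hk', by omega, by omega, hargs⟩
      · obtain ⟨k, k', args', S, hk, hk', hkk, hS, hargs⟩ := ih hE'
        exact ⟨k + 1, k' + 1, args', S, ⟨_, hstep.headStep, hk⟩, ⟨_, hL₁, hk'⟩, by omega,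
          by omega, hargs⟩

/-! ### Clocked Böhm trees -/

/-- The position in `cBT (λ^n. y A₀ ⋯ A_{m-1})` of the root of the tree of `Aᵢ`. -/
def argPos (n m i : ℕ) : List ℕ := List.replicate n 0 ++ List.replicate (m - 1 - i) 1 ++ [2]

theorem argPos_append (n m i : ℕ) (q : List ℕ) :
    argPos n m i ++ q = List.replicate n 0 ++ List.replicate (m - 1 - i) 1 ++ 2 :: q := by
  simp [argPos]

theorem length_argPos_append (n m i : ℕ) (q : List ℕ) :
    (argPos n m i ++ q).length = n + (m - 1 - i) + 1 + q.length := by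
  simp [argPos]; omega

theorem argPos_append_inj {n m i j : ℕ} {q q' : List ℕ}
    (h : argPos n m i ++ q = argPos n m j ++ q') (hi : i < m) (hj : j < m) : i = j ∧ q = q' := by
  simp only [argPos, List.append_assoc, List.append_cancel_left_eq] at h
  suffices ∀ a b, List.replicate a 1 ++ [2] ++ q = List.replicate b 1 ++ [2] ++ q' →
      a = b ∧ q = q' by
    obtain ⟨hab, rfl⟩ := this _ _ (by simpa using h)
    exact ⟨by omega, rfl⟩
  clear h
  intro a
  induction a with
  | zero => rintro (_ | b) h <;> simp_all [List.replicate_succ]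
  | succ a ih =>
      rintro (_ | b) h
      · simp [List.replicate_succ] at h
      · simp only [List.replicate_succ, List.cons_append, List.cons.injEq, true_and] at h
        exact (ih b h).imp (by omega) id

namespace CBT

theorem arg {M : Lam} {k n y i : ℕ} {args : List Lam} {q : List ℕ} {o : BTN}
    {a : Option ℕ} (hb : HeadSteps k M (mkHnf n y args)) (hi : i < args.length)
    (hq : CBT args[i] q o a) : CBT M (argPos n args.length i ++ q) o a := by
  rw [argPos_append]; exact .child hb hi hq

theorem hasHnf_of_some {M : Lam} {p : List ℕ} {o : BTN} {k₀ : ℕ} (hd : CBT M p o (some k₀)) :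
    HasHnf M := by
  generalize ha : some k₀ = a at hd
  cases hd with
  | bot => cases ha
  | _ => exact ⟨_, _, ‹HeadSteps _ M _›, _, _, _, rfl⟩

theorem eq_bot_of_not_hasHnf {M : Lam} {p : List ℕ} {o : BTN} {a : Option ℕ} (hd : CBT M p o a)
    (h : ¬ HasHnf M) : p = [] ∧ o = BTN.bot ∧ a = none := by
  cases hd with
  | bot => exact ⟨rfl, rfl, rfl⟩
  | _ => exact absurd ⟨_, _, ‹HeadSteps _ M _›, _, _, _, rfl⟩ h

theorem cases_of_headSteps {M : Lam} {p : List ℕ} {o : BTN} {a : Option ℕ} (hd : CBT M p o a)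
    {k n y : ℕ} {args : List Lam} (hb : HeadSteps k M (mkHnf n y args)) :
    (∃ i, i < n ∧ p = List.replicate i 0 ∧ o = BTN.lam ∧
        a = (if i = 0 then some k else none)) ∨
    (∃ j, j < args.length ∧ p = List.replicate n 0 ++ List.replicate j 1 ∧ o = BTN.app ∧
        a = (if n = 0 ∧ j = 0 then some k else none)) ∨
    (p = List.replicate n 0 ++ List.replicate args.length 1 ∧ o = BTN.var y ∧
        a = (if n = 0 ∧ args.length = 0 then some k else none)) ∨
    (∃ i, ∃ h : i < args.length, ∃ q, p = argPos n args.length i ++ q ∧ CBT args[i] q o a) := by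
  cases hd with
  | bot h => exact absurd ⟨k, _, hb, n, y, args, rfl⟩ h
  | lam hs hi =>
      obtain ⟨rfl, rfl, rfl, rfl⟩ := hs.eq_of_mkHnf hb
      exact .inl ⟨_, hi, rfl, rfl, rfl⟩
  | app hs hj =>
      obtain ⟨rfl, rfl, rfl, rfl⟩ := hs.eq_of_mkHnf hb
      exact .inr (.inl ⟨_, hj, rfl, rfl, rfl⟩)
  | var hs =>
      obtain ⟨rfl, rfl, rfl, rfl⟩ := hs.eq_of_mkHnf hb
      exact .inr (.inr (.inl ⟨rfl, rfl, rfl⟩))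
  | child hs hi hq =>
      obtain ⟨rfl, rfl, rfl, rfl⟩ := hs.eq_of_mkHnf hb
      exact .inr (.inr (.inr ⟨_, hi, _, (argPos_append ..).symm, hq⟩))

theorem some_cases {M : Lam} {p : List ℕ} {o : BTN} {k₀ : ℕ} (hd : CBT M p o (some k₀))
    {k n y : ℕ} {args : List Lam} (hb : HeadSteps k M (mkHnf n y args)) :
    (p = [] ∧ k₀ = k) ∨
    ∃ i, ∃ h : i < args.length, ∃ q,
      p = argPos n args.length i ++ q ∧ CBT args[i] q o (some k₀) := by
  rcases hd.cases_of_headSteps hb with ⟨i, -, rfl, -, ha⟩ | ⟨j, -, rfl, -, ha⟩ | ⟨rfl, -, ha⟩ | h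
  · split_ifs at ha with h0
    cases ha; exact .inl ⟨by simp [h0], rfl⟩
  · split_ifs at ha with h0
    cases ha; exact .inl ⟨by simp [h0], rfl⟩
  · split_ifs at ha with h0
    cases ha; exact .inl ⟨by simp [h0], rfl⟩
  · exact .inr h

theorem exists_root {L : Lam} {k n y : ℕ} {args : List Lam}
    (hb : HeadSteps k L (mkHnf n y args)) : ∃ o, CBT L [] o (some k) := by
  cases n with
  | succ n => exact ⟨_, by simpa using CBT.lam (i := 0) hb (Nat.succ_pos n)⟩
  | zero =>
      cases args with
      | nil => exact ⟨_, by simpa using CBT.var hb⟩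
      | cons A rest => exact ⟨_, by simpa using CBT.app (j := 0) hb (by simp)⟩

end CBT

theorem SimpleTerm.exists_hnf_of_costRed {T : ℕ} {M L : Lam} (hM : SimpleTerm M) (hH : HasHnf M)
    (hE : CostRed T M L) :
    ∃ k k' n y args args', ∃ cost : ℕ → ℕ, HeadSteps k M (mkHnf n y args) ∧
      HeadSteps k' L (mkHnf n y args') ∧ args'.length = args.length ∧ k' ≤ k ∧
      k - k' + ∑ i ∈ range args.length, cost i ≤ T ∧
      ∀ i (hi : i < args.length) (hi' : i < args'.length),
        SimpleTerm args[i] ∧ CostRed (cost i) args[i] args'[i] := by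
  obtain ⟨n, y, args, hred, hargs⟩ := hM.exists_simpleHeadSteps_mkHnf hH
  obtain ⟨k, k', args', S, hk, hk', hkk, hS, hlist⟩ := hE.simulate hred
  obtain ⟨cost, rfl, hcost⟩ := hlist.exists_cost
  exact ⟨k, k', n, y, args, args', cost, hk, hk', hlist.length_eq, hkk, hS,
    fun i hi hi' => ⟨hargs _ (List.getElem_mem hi), hcost i hi hi'⟩⟩

theorem btNode_of_headSteps {M L : Lam} {k k' n y : ℕ} {args args' : List Lam}
    {p : List ℕ} {o : BTN} (hM : HeadSteps k M (mkHnf n y args))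
    (hL : HeadSteps k' L (mkHnf n y args')) (hlen : args'.length = args.length)
    (hargs : ∀ i (hi : i < args.length) (hi' : i < args'.length) q, q.length < p.length →
      BTNode args[i] q o → BTNode args'[i] q o) :
    BTNode M p o → BTNode L p o := by
  rintro ⟨a, hd⟩
  rcases hd.cases_of_headSteps hM with ⟨i, hi, rfl, rfl, -⟩ | ⟨j, hj, rfl, rfl, -⟩ |
    ⟨rfl, rfl, -⟩ | ⟨i, hi, q, rfl, hq⟩
  · exact ⟨_, .lam hL hi⟩
  · exact ⟨_, .app hL (hlen ▸ hj)⟩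
  · exact ⟨_, hlen ▸ CBT.var hL⟩
  · obtain ⟨a', hq'⟩ := hargs i hi (hlen ▸ hi) q (by simp only [length_argPos_append]; omega)
      ⟨a, hq⟩
    exact ⟨a', hlen ▸ CBT.arg hL (hlen ▸ hi) hq'⟩

theorem SimpleTerm.btNode_iff {T : ℕ} {M L : Lam} (hM : SimpleTerm M) (hE : CostRed T M L)
    (p : List ℕ) (o : BTN) : BTNode M p o ↔ BTNode L p o := by
  induction hp : p.length using Nat.strong_induction_on generalizing T M L p with
  | _ len ih =>
  by_cases hH : HasHnf M
  · obtain ⟨k, k', n, y, args, args', cost, hk, hk', hlen, -, -, hargs⟩ :=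
      hM.exists_hnf_of_costRed hH hE
    have hchild : ∀ i (hi : i < args.length) (hi' : i < args'.length) q, q.length < p.length →
        (BTNode args[i] q o ↔ BTNode args'[i] q o) := fun i hi hi' q hq =>
      ih _ (hp ▸ hq) (hargs i hi hi').1 (hargs i hi hi').2 q rfl
    exact ⟨btNode_of_headSteps hk hk' hlen fun i hi hi' q hq => (hchild i hi hi' q hq).1,
      btNode_of_headSteps hk' hk hlen.symm fun i hi' hi q hq => (hchild i hi hi' q hq).2⟩
  · have hL : ¬ HasHnf L := fun h => hH (h.of_betaStar hE.betaStar)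
    constructor <;> rintro ⟨a, hd⟩
    · obtain ⟨rfl, rfl, rfl⟩ := hd.eq_bot_of_not_hasHnf hH; exact ⟨none, .bot hL⟩
    · obtain ⟨rfl, rfl, rfl⟩ := hd.eq_bot_of_not_hasHnf hL; exact ⟨none, .bot hH⟩

theorem SimpleTerm.exists_some_of_costRed {T : ℕ} {M L : Lam} (hM : SimpleTerm M)
    (hE : CostRed T M L) {p : List ℕ} {o : BTN} {k₀ : ℕ} (hd : CBT M p o (some k₀)) :
    ∃ o' k', CBT L p o' (some k') := by
  induction hp : p.length using Nat.strong_induction_on generalizing T M L p o k₀ with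
  | _ len ih =>
  obtain ⟨k, k', n, y, args, args', cost, hk, hk', hlen, -, -, hargs⟩ :=
    hM.exists_hnf_of_costRed hd.hasHnf_of_some hE
  rcases hd.some_cases hk with ⟨rfl, -⟩ | ⟨i, hi, q, rfl, hq⟩
  · obtain ⟨o', ho'⟩ := CBT.exists_root hk'
    exact ⟨o', k', ho'⟩
  · have hi' : i < args'.length := hlen ▸ hi
    obtain ⟨o', kq, hq'⟩ := ih q.length (by rw [← hp, length_argPos_append]; omega)
      (hargs i hi hi').1 (hargs i hi hi').2 hq rfl
    exact ⟨o', kq, hlen ▸ CBT.arg hk' hi' hq'⟩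

/-! ### Counting annotation differences -/

theorem card_le_card_filter_add_sum_card_preimage {α : Type*} [DecidableEq α]
    (s : Finset (List α)) (m : ℕ) (pre : ℕ → List α)
    (hs : ∀ p ∈ s, p = [] ∨ ∃ i < m, ∃ q, p = pre i ++ q) :
    s.card ≤ (s.filter (· = [])).card + ∑ i ∈ range m,
      (s.preimage (pre i ++ ·) (List.append_right_injective _).injOn).card := by
  have hsub : s ⊆ s.filter (· = []) ∪ (range m).biUnion fun i =>
      (s.preimage (pre i ++ ·) (List.append_right_injective _).injOn).image (pre i ++ ·) := by
    intro p hp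
    rcases hs p hp with rfl | ⟨i, hi, q, rfl⟩
    · simp [hp]
    · simp only [mem_union, mem_biUnion, mem_image, mem_preimage, mem_range]
      exact .inr ⟨i, hi, q, hp, rfl⟩
  calc s.card ≤ _ := card_le_card hsub
    _ ≤ _ := card_union_le _ _
    _ ≤ _ := Nat.add_le_add_left (card_biUnion_le.trans (sum_le_sum fun _ _ => card_image_le)) _

def AnnDiffersAt (M L : Lam) (p : List ℕ) : Prop :=
  ∃ o₁ k₁ o₂ k₂, CBT M p o₁ (some k₁) ∧ CBT L p o₂ (some k₂) ∧ k₁ ≠ k₂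

theorem AnnDiffersAt.eq_nil_or_argPos {M L : Lam} {p : List ℕ} {k n y : ℕ} {args : List Lam}
    (hd : AnnDiffersAt M L p) (hk : HeadSteps k M (mkHnf n y args)) :
    p = [] ∨ ∃ i < args.length, ∃ q, p = argPos n args.length i ++ q := by
  obtain ⟨o₁, k₁, -, -, h₁, -⟩ := hd
  rcases h₁.some_cases hk with ⟨rfl, -⟩ | ⟨i, hi, q, rfl, -⟩
  exacts [.inl rfl, .inr ⟨i, hi, q, rfl⟩]

theorem AnnDiffersAt.ne_of_nil {M L : Lam} {k k' n n' y y' : ℕ} {args args' : List Lam}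
    (hd : AnnDiffersAt M L []) (hk : HeadSteps k M (mkHnf n y args))
    (hk' : HeadSteps k' L (mkHnf n' y' args')) : k ≠ k' := by
  obtain ⟨o₁, k₁, o₂, k₂, h₁, h₂, hne⟩ := hd
  rcases h₁.some_cases hk with ⟨-, rfl⟩ | ⟨_, _, _, h, -⟩
  · rcases h₂.some_cases hk' with ⟨-, rfl⟩ | ⟨_, _, _, h, -⟩
    · exact hne
    · simp [argPos] at h
  · simp [argPos] at h

theorem AnnDiffersAt.arg {M L : Lam} {k k' n y i : ℕ} {args args' : List Lam} {q : List ℕ}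
    (hd : AnnDiffersAt M L (argPos n args.length i ++ q)) (hk : HeadSteps k M (mkHnf n y args))
    (hk' : HeadSteps k' L (mkHnf n y args')) (hlen : args'.length = args.length)
    (hi : i < args.length) (hi' : i < args'.length) : AnnDiffersAt args[i] args'[i] q := by
  obtain ⟨o₁, k₁, o₂, k₂, h₁, h₂, hne⟩ := hd
  rcases h₁.some_cases hk with ⟨h, -⟩ | ⟨i₁, hi₁, q₁, h, hq₁⟩
  · simp [argPos] at h
  rcases h₂.some_cases hk' with ⟨h', -⟩ | ⟨i₂, hi₂, q₂, h', hq₂⟩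
  · simp [argPos] at h'
  rw [hlen] at h'
  obtain ⟨rfl, rfl⟩ := argPos_append_inj h hi hi₁
  obtain ⟨rfl, rfl⟩ := argPos_append_inj h' hi (hlen ▸ hi₂)
  exact ⟨o₁, k₁, o₂, k₂, hq₁, hq₂, hne⟩

/-- At the root a difference is paid by the head steps that `L` saves; below the root the
budgets of the arguments take over. -/
theorem SimpleTerm.card_le_of_annDiffersAt {T : ℕ} {M L : Lam} (hM : SimpleTerm M)
    (hE : CostRed T M L) (s : Finset (List ℕ)) (hs : ∀ p ∈ s, AnnDiffersAt M L p) :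
    s.card ≤ T := by
  suffices key : ∀ len {T M L}, SimpleTerm M → CostRed T M L → ∀ s : Finset (List ℕ),
      (∀ p ∈ s, p.length < len ∧ AnnDiffersAt M L p) → s.card ≤ T from
    key _ hM hE s fun p hp => ⟨Nat.lt_succ_of_le (le_sup (f := List.length) hp), hs p hp⟩
  intro len
  induction len using Nat.strong_induction_on with
  | _ len ih =>
  intro T M L hM hE s hs
  rcases s.eq_empty_or_nonempty with rfl | ⟨p₀, hp₀⟩
  · simp
  obtain ⟨-, o, k₀, -, -, hd₀, -⟩ := hs p₀ hp₀
  obtain ⟨k, k', n, y, args, args', cost, hk, hk', hlen, hkk, hT, hargs⟩ :=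
    hM.exists_hnf_of_costRed hd₀.hasHnf_of_some hE
  have hroot : (s.filter (· = [])).card ≤ k - k' := by
    rcases (s.filter (· = [])).eq_empty_or_nonempty with h0 | ⟨p, hp⟩
    · simp [h0]
    obtain ⟨hps, rfl⟩ := mem_filter.1 hp
    have := ((hs [] hps).2.ne_of_nil hk hk')
    have : (s.filter (· = [])).card ≤ 1 := card_le_one.2 (by simp_all)
    omega
  have hchild : ∀ i ∈ range args.length, (s.preimage (argPos n args.length i ++ ·)
      (List.append_right_injective _).injOn).card ≤ cost i := by
    intro i hi
    have hi : i < args.length := mem_range.1 hi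
    have hi' : i < args'.length := hlen ▸ hi
    refine ih (len - 1) (by have := (hs p₀ hp₀).1; omega) (hargs i hi hi').1
      (hargs i hi hi').2 _ fun q hq => ?_
    obtain ⟨hlt, hd⟩ := hs _ (mem_preimage.1 hq)
    rw [length_argPos_append] at hlt
    exact ⟨by omega, hd.arg hk hk' hlen hi hi'⟩
  calc s.card ≤ _ := card_le_card_filter_add_sum_card_preimage s args.length
        (argPos n args.length) fun p hp => (hs p hp).2.eq_nil_or_argPos hk
    _ ≤ k - k' + ∑ i ∈ range args.length, cost i := Nat.add_le_add hroot (sum_le_sum hchild)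
    _ ≤ T := hT

theorem SimpleTerm.finite_annDiffersAt {T : ℕ} {M L : Lam} (hM : SimpleTerm M)
    (hE : CostRed T M L) : {p | AnnDiffersAt M L p}.Finite := by
  by_contra hinf
  obtain ⟨s, hs, hcard⟩ := Set.Infinite.exists_subset_card_eq hinf (T + 1)
  have := hM.card_le_of_annDiffersAt hE s fun p hp => hs hp
  omega

theorem matchesEventually_of_finite {M N : Lam} (hBT : SameBT M N)
    (hfin : {p | AnnDiffersAt M N p}.Finite) : MatchesEventually M N := by
  obtain ⟨l, hl⟩ := (hfin.image List.length).bddAbove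
  refine ⟨hBT, l + 1, fun p o₁ o₂ k₁ k₂ hp h₁ h₂ => ?_⟩
  by_contra hne
  have := hl ⟨p, ⟨o₁, k₁, o₂, k₂, h₁, h₂, hne⟩, rfl⟩
  omega

/-- simple terms that do not match eventually are not β-convertible. -/
theorem discrimination_simple_simple (M N : Lam) (hM : SimpleTerm M) (hN : SimpleTerm N)
    (h : ¬ MatchesEventually M N) : ¬ Conv M N := by
  intro hconv
  obtain ⟨L, hML, hNL⟩ := hconv.exists_betaStar
  obtain ⟨T, hT⟩ := hML.exists_costRed
  obtain ⟨T', hT'⟩ := hNL.exists_costRed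
  refine h (matchesEventually_of_finite
    (fun p o => (hM.btNode_iff hT p o).trans (hN.btNode_iff hT' p o).symm) ?_)
  refine ((hM.finite_annDiffersAt hT).union (hN.finite_annDiffersAt hT')).subset ?_
  rintro p ⟨o₁, k₁, o₂, k₂, h₁, h₂, hne⟩
  obtain ⟨o, k, hL⟩ := hM.exists_some_of_costRed hT h₁
  by_cases e : k₁ = k
  · exact .inr ⟨o₂, k₂, o, k, h₂, hL, by omega⟩
  · exact .inl ⟨o₁, k₁, o, k, h₁, hL, e⟩

end Lam
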